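/- arXiv:2410.00750 — 4 statements merged into one kernel-verified Lean document; each statement's English description precedes it below -/
import Mathlib

section
/- Let ν_V, ν_H > 0 and suppose nonnegative reals (λ_0,λ_V,λ_H,τ_V,τ_H,p_V,p_H,p_0) and (λ̃_0,λ̃_V,λ̃_H,τ̃_V,τ̃_H,p̃_V,p̃_H,p̃_0) satisfy the five conditions of the s_π theorem: (1) λ̃_H+τ̃_H = λ_H+τ_H and λ̃_V+τ̃_V = λ_V+τ_V; (2) λ̃_0 = λ_0 = ν_V ν_H p_0, λ̃_V = ν_H p_V, λ̃_H = ν_V p_H; (3) ν_V τ̃_V = ν_H τ_H and ν_H τ̃_H = ν_V τ_V; (4) ν_H p̃_V = λ_V, ν_V p̃_H = λ_H, p̃_0 = p_0; (5) p̃_V+p̃_H+p̃_0 = p_V+p_H+p_0. Then for all nonnegative integers HE, HT, HB, OB, HS, OA, HA, VT, VE, VB, VS, VA, CC satisfying the Euler-type relations HE+HT+HB+OB = HS+OA+HA+VT and VE+VT+VB+OB = VS+OA+VA+HT, the following identity holds: ν_V^VE ν_H^HE λ_0^OB λ_H^VB λ_V^HB τ_H^VT τ_V^HT p_V^HA p_H^VA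 p_0^OA (1-p_V-p_H-p_0)^CC = ν_V^VS ν_H^HS λ̃_0^OA λ̃_H^VA λ̃_V^HA τ̃_H^HT τ̃_V^VT p̃_V^HB p̃_H^VB p̃_0^OB (1-p̃_V-p̃_H-p̃_0)^CC. -/
theorem stmt_5 (νV νH : ℝ) (hνV : 0 < νV) (hνH : 0 < νH)
    (l0 lV lH tV tH pV pH p0 tl0 tlV tlH ttV ttH tpV tpH tp0 : ℝ)
    (hl0 : 0 ≤ l0) (hlV : 0 ≤ lV) (hlH : 0 ≤ lH) (htV : 0 ≤ tV) (htH : 0 ≤ tH)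
    (hpV : 0 ≤ pV) (hpH : 0 ≤ pH) (hp0 : 0 ≤ p0)
    (htl0 : 0 ≤ tl0) (htlV : 0 ≤ tlV) (htlH : 0 ≤ tlH) (httV : 0 ≤ ttV) (httH : 0 ≤ ttH)
    (htpV : 0 ≤ tpV) (htpH : 0 ≤ tpH) (htp0 : 0 ≤ tp0)
    (c1a : tlH + ttH = lH + tH) (c1b : tlV + ttV = lV + tV)
    (c2a : tl0 = l0) (c2b : l0 = νV * νH * p0) (c2c : tlV = νH * pV) (c2d : tlH = νV * pH)
    (c3a : νV * ttV = νH * tH) (c3b : νH * ttH = νV * tV)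
    (c4a : νH * tpV = lV) (c4b : νV * tpH = lH) (c4c : tp0 = p0)
    (c5 : tpV + tpH + tp0 = pV + pH + p0)
    (HE HT HB OB HS OA HA VT VE VB VS VA CC : ℕ)
    (hh : HE + HT + HB + OB = HS + OA + HA + VT)
    (hv : VE + VT + VB + OB = VS + OA + VA + HT) :
    νV ^ VE * νH ^ HE * l0 ^ OB * lH ^ VB * lV ^ HB * tH ^ VT * tV ^ HT *
      pV ^ HA * pH ^ VA * p0 ^ OA * (1 - pV - pH - p0) ^ CC
    = νV ^ VS * νH ^ HS * tl0 ^ OA * tlH ^ VA * tlV ^ HA * ttH ^ HT * ttV ^ VT *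
      tpV ^ HB * tpH ^ VB * tp0 ^ OB * (1 - tpV - tpH - tp0) ^ CC := by
  have hC : (1 - pV - pH - p0 : ℝ) = 1 - tpV - tpH - tp0 := by linarith
  have hne : (νV ^ (VT+VB+OB) * νH ^ (HT+HB+OB)) ≠ 0 := by positivity
  apply mul_left_cancel₀ hne
  have lhs_eq :
      νV ^ (VT+VB+OB) * νH ^ (HT+HB+OB) *
        (νV ^ VE * νH ^ HE * l0 ^ OB * lH ^ VB * lV ^ HB * tH ^ VT * tV ^ HT *
          pV ^ HA * pH ^ VA * p0 ^ OA * (1 - pV - pH - p0) ^ CC)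
      = νV ^ (VE+VT+VB+OB+OB) * νH ^ (HE+HT+HB+OB+OB) * p0 ^ (OB+OA) *
        lH ^ VB * lV ^ HB * tH ^ VT * tV ^ HT * pV ^ HA * pH ^ VA *
        (1 - tpV - tpH - tp0) ^ CC := by
    rw [c2b, hC]; ring
  have rhs_eq :
      νV ^ (VT+VB+OB) * νH ^ (HT+HB+OB) *
        (νV ^ VS * νH ^ HS * tl0 ^ OA * tlH ^ VA * tlV ^ HA * ttH ^ HT * ttV ^ VT *
          tpV ^ HB * tpH ^ VB * tp0 ^ OB * (1 - tpV - tpH - tp0) ^ CC)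
      = νV ^ (VS+OA+VA+HT+OB) * νH ^ (HS+OA+HA+VT+OB) * p0 ^ (OB+OA) *
        lH ^ VB * lV ^ HB * tH ^ VT * tV ^ HT * pV ^ HA * pH ^ VA *
        (1 - tpV - tpH - tp0) ^ CC := by
    have e1 : (νV * ttV) ^ VT = (νH * tH) ^ VT := by rw [c3a]
    have e2 : (νH * ttH) ^ HT = (νV * tV) ^ HT := by rw [c3b]
    have e3 : (νH * tpV) ^ HB = lV ^ HB := by rw [c4a]
    have e4 : (νV * tpH) ^ VB = lH ^ VB := by rw [c4b]
    calc νV ^ (VT+VB+OB) * νH ^ (HT+HB+OB) *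
        (νV ^ VS * νH ^ HS * tl0 ^ OA * tlH ^ VA * tlV ^ HA * ttH ^ HT * ttV ^ VT *
          tpV ^ HB * tpH ^ VB * tp0 ^ OB * (1 - tpV - tpH - tp0) ^ CC)
        = (νV * ttV) ^ VT * (νH * ttH) ^ HT * (νH * tpV) ^ HB * (νV * tpH) ^ VB *
          νV ^ OB * νH ^ OB * νV ^ VS * νH ^ HS * tl0 ^ OA * tlH ^ VA * tlV ^ HA *
          tp0 ^ OB * (1 - tpV - tpH - tp0) ^ CC := by ring
      _ = _ := by
          rw [e1, e2, e3, e4, c2a, c2b, c2c, c2d, c4c]; ring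
  rw [lhs_eq, rhs_eq, hv, hh]
end

section
/- Let ν_V > 0 and suppose nonnegative reals (λ_0,λ_V,λ_H,τ_V,τ_H,p_V,p_H,p_0) and (λ̃_0,λ̃_V,λ̃_H,τ̃_V,τ̃_H,p̃_V,p̃_H,p̃_0) satisfy: λ̃_0 = λ_0 = ν_V τ_V, λ̃_V = ν_V p_H, λ̃_H = λ_V, τ̃_V = ν_V p_0, ν_V τ̃_H = λ_0, ν_V p̃_V = λ_H, p̃_H = p_V, ν_V p̃_0 = τ_H, and p̃_V+p̃_H+p̃_0 = p_V+p_H+p_0. Then for all nonnegative integers VE, VS, HT, VA, OB, OA, VB, VT, HE, HB, HA, CC satisfying VE+VT+VB+OB = VS+OA+VA+HT, the identity λ_0^OB λ_H^VB λ_V^HB τ_H^VT τ_V^HT p_V^HA p_H^VA p_0^OA (1-p_V-p_H-p_0)^CC · ν_V^VE = λ̃_0^HT λ̃_H^HB λ̃_V^VA τ̃_H^OB τ̃_V^OA p̃_V^VB p̃_H^HA p̃_0^VT (1-p̃_V-p̃_H-p̃_0)^CC · ν_V^VS holds. -/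
theorem stmt_6 (νV : ℝ) (hνV : 0 < νV)
    (l0 lV lH tV tH pV pH p0 tl0 tlV tlH ttV ttH tpV tpH tp0 : ℝ)
    (hl0 : 0 ≤ l0) (hlV : 0 ≤ lV) (hlH : 0 ≤ lH) (htV : 0 ≤ tV) (htH : 0 ≤ tH)
    (hpV : 0 ≤ pV) (hpH : 0 ≤ pH) (hp0 : 0 ≤ p0)
    (htl0 : 0 ≤ tl0) (htlV : 0 ≤ tlV) (htlH : 0 ≤ tlH) (httV : 0 ≤ ttV) (httH : 0 ≤ ttH)
    (htpV : 0 ≤ tpV) (htpH : 0 ≤ tpH) (htp0 : 0 ≤ tp0)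
    (c2a : tl0 = l0) (c2b : l0 = νV * tV) (c2c : tlV = νV * pH) (c2d : tlH = lV)
    (c3a : ttV = νV * p0) (c3b : νV * ttH = l0)
    (c4a : νV * tpV = lH) (c4b : tpH = pV) (c4c : νV * tp0 = tH)
    (c5 : tpV + tpH + tp0 = pV + pH + p0)
    (VE VS HT VA OB OA VB VT HE HB HA CC : ℕ)
    (hv : VE + VT + VB + OB = VS + OA + VA + HT) :
    l0 ^ OB * lH ^ VB * lV ^ HB * tH ^ VT * tV ^ HT * pV ^ HA * pH ^ VA * p0 ^ OA *
      (1 - pV - pH - p0) ^ CC * νV ^ VE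
    = tl0 ^ HT * tlH ^ HB * tlV ^ VA * ttH ^ OB * ttV ^ OA * tpV ^ VB * tpH ^ HA *
      tp0 ^ VT * (1 - tpV - tpH - tp0) ^ CC * νV ^ VS := by
  have hν : νV ≠ 0 := ne_of_gt hνV
  have hc : (1 - tpV - tpH - tp0) = (1 - pV - pH - p0) := by linarith
  have hcancel : νV ^ (VT + VB + OB) ≠ 0 := pow_ne_zero _ hν
  apply mul_left_cancel₀ hcancel
  have e1 : tH ^ VT = νV ^ VT * tp0 ^ VT := by rw [← mul_pow, c4c]
  have e2 : lH ^ VB = νV ^ VB * tpV ^ VB := by rw [← mul_pow, c4a]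
  have e3 : l0 ^ OB = νV ^ OB * ttH ^ OB := by rw [← mul_pow, c3b]
  have e4 : tl0 ^ HT = νV ^ HT * tV ^ HT := by rw [c2a, c2b, mul_pow]
  have e5 : tlV ^ VA = νV ^ VA * pH ^ VA := by rw [c2c, mul_pow]
  have e6 : ttV ^ OA = νV ^ OA * p0 ^ OA := by rw [c3a, mul_pow]
  have hexp : νV ^ (VE + VT + VB + OB) = νV ^ (VS + OA + VA + HT) := by rw [hv]
  calc νV ^ (VT + VB + OB) *
      (l0 ^ OB * lH ^ VB * lV ^ HB * tH ^ VT * tV ^ HT * pV ^ HA * pH ^ VA * p0 ^ OA *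
        (1 - pV - pH - p0) ^ CC * νV ^ VE)
      = l0 ^ OB * lH ^ VB * lV ^ HB * tH ^ VT * tV ^ HT * pV ^ HA * pH ^ VA * p0 ^ OA *
        (1 - pV - pH - p0) ^ CC * νV ^ (VE + VT + VB + OB) := by
        rw [pow_add, pow_add, pow_add]; ring
    _ = l0 ^ OB * lH ^ VB * lV ^ HB * tH ^ VT * tV ^ HT * pV ^ HA * pH ^ VA * p0 ^ OA *
        (1 - pV - pH - p0) ^ CC * νV ^ (VS + OA + VA + HT) := by rw [hexp]
    _ = νV ^ (VT + VB + OB) *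
        (tl0 ^ HT * tlH ^ HB * tlV ^ VA * ttH ^ OB * ttV ^ OA * tpV ^ VB * tpH ^ HA *
          tp0 ^ VT * (1 - tpV - tpH - tp0) ^ CC * νV ^ VS) := by
        rw [hc, e1, e2, e3, e4, e5, e6, c2d, c4b, pow_add, pow_add, pow_add, pow_add, pow_add]; ring
end

section
/- Suppose the parameter p satisfies the hypotheses of the s_π corollary: A, B_V, B_H ≠ 0 and B_H B_V λ_0 = A² p_0, where A = (λ_H+τ_H)(λ_V+τ_V) - τ_V τ_H, B_V = (p_H+p_V)(λ_V+τ_V) - p_V λ_V, B_H = (p_H+p_V)(λ_H+τ_H) - p_H λ_H. Set ν_H = A/B_H and ν_V = A/B_V, and define p̃ by λ̃_0 = λ_0, λ̃_V = ν_H p_V, λ̃_H = ν_V p_H, τ̃_V = (B_V/B_H)τ_H, τ̃_H = (B_H/B_V)τ_V, p̃_V = λ_V/ν_H, p̃_H = λ_H/ν_V, p̃_0 = p_0. Then the five conditions of the s_π theorem hold: (1) λ̃_H+τ̃_H = λ_H+τ_H and λ̃_V+τ̃_V = λ_V+τ_V; (2) λ̃_0 = λ_0 = ν_V ν_H p_0,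 λ̃_V = ν_H p_V, λ̃_H = ν_V p_H; (3) ν_V τ̃_V = ν_H τ_H and ν_H τ̃_H = ν_V τ_V; (4) ν_H p̃_V = λ_V, ν_V p̃_H = λ_H, p̃_0 = p_0; (5) p̃_V+p̃_H+p̃_0 = p_V+p_H+p_0. -/
/-! After clearing the denominators `B_H`, `B_V`, `A`, every condition is one of three polynomial
identities between `A`, `B_V`, `B_H` and the parameters, or the hypothesis `B_H B_V λ_0 = A² p_0`. -/

section ReverseParameter

variable {lV lH tV tH pV pH A BV BH : ℝ}

theorem A_mul_pH_add_BH_mul_tV (hA : A = (lH + tH) * (lV + tV) - tV * tH)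
    (hBV : BV = (pH + pV) * (lV + tV) - pV * lV) (hBH : BH = (pH + pV) * (lH + tH) - pH * lH) :
    A * pH + BH * tV = BV * (lH + tH) := by
  subst hA hBV hBH; ring

theorem A_mul_pV_add_BV_mul_tH (hA : A = (lH + tH) * (lV + tV) - tV * tH)
    (hBV : BV = (pH + pV) * (lV + tV) - pV * lV) (hBH : BH = (pH + pV) * (lH + tH) - pH * lH) :
    A * pV + BV * tH = BH * (lV + tV) := by
  subst hA hBV hBH; ring

theorem lV_mul_BH_add_lH_mul_BV (hA : A = (lH + tH) * (lV + tV) - tV * tH)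
    (hBV : BV = (pH + pV) * (lV + tV) - pV * lV) (hBH : BH = (pH + pV) * (lH + tH) - pH * lH) :
    lV * BH + lH * BV = A * (pV + pH) := by
  subst hA hBV hBH; ring

end ReverseParameter

theorem stmt_13_general (l0 lV lH tV tH pV pH p0 : ℝ)
    (A BV BH : ℝ)
    (hA : A = (lH + tH) * (lV + tV) - tV * tH)
    (hBV : BV = (pH + pV) * (lV + tV) - pV * lV)
    (hBH : BH = (pH + pV) * (lH + tH) - pH * lH)
    (hA0 : A ≠ 0) (hBV0 : BV ≠ 0) (hBH0 : BH ≠ 0)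
    (hrev : BH * BV * l0 = A ^ 2 * p0)
    (νH νV : ℝ) (hνH : νH = A / BH) (hνV : νV = A / BV)
    (tl0 tlV tlH ttV ttH tpV tpH tp0 : ℝ)
    (h1 : tl0 = l0) (h2 : tlV = νH * pV) (h3 : tlH = νV * pH)
    (h4 : ttV = (BV / BH) * tH) (h5 : ttH = (BH / BV) * tV)
    (h6 : tpV = lV / νH) (h7 : tpH = lH / νV) (h8 : tp0 = p0) :
    (tlH + ttH = lH + tH ∧ tlV + ttV = lV + tV) ∧
    (tl0 = l0 ∧ l0 = νV * νH * p0 ∧ tlV = νH * pV ∧ tlH = νV * pH) ∧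
    (νV * ttV = νH * tH ∧ νH * ttH = νV * tV) ∧
    (νH * tpV = lV ∧ νV * tpH = lH ∧ tp0 = p0) ∧
    (tpV + tpH + tp0 = pV + pH + p0) := by
  have sumH := A_mul_pH_add_BH_mul_tV hA hBV hBH
  have sumV := A_mul_pV_add_BV_mul_tH hA hBV hBH
  have trace := lV_mul_BH_add_lH_mul_BV hA hBV hBH
  subst h1 h2 h3 h4 h5 h6 h7 h8 hνH hνV
  refine ⟨⟨?_, ?_⟩, ⟨rfl, ?_, rfl, rfl⟩, ⟨?_, ?_⟩, ⟨?_, ?_, rfl⟩, ?_⟩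
  · field_simp
    linear_combination sumH
  · field_simp
    linear_combination sumV
  · field_simp
    linear_combination hrev
  · field_simp
  · field_simp
  · field_simp
  · field_simp
  · field_simp
    linear_combination trace

theorem stmt_13 (l0 lV lH tV tH pV pH p0 : ℝ)
    (hl0 : 0 ≤ l0) (hlV : 0 ≤ lV) (hlH : 0 ≤ lH) (htV : 0 ≤ tV) (htH : 0 ≤ tH)
    (hpV : 0 ≤ pV) (hpV' : pV ≤ 1) (hpH : 0 ≤ pH) (hpH' : pH ≤ 1)
    (hp0 : 0 ≤ p0) (hp0' : p0 ≤ 1)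
    (A BV BH : ℝ)
    (hA : A = (lH + tH) * (lV + tV) - tV * tH)
    (hBV : BV = (pH + pV) * (lV + tV) - pV * lV)
    (hBH : BH = (pH + pV) * (lH + tH) - pH * lH)
    (hA0 : A ≠ 0) (hBV0 : BV ≠ 0) (hBH0 : BH ≠ 0)
    (hrev : BH * BV * l0 = A ^ 2 * p0)
    (νH νV : ℝ) (hνH : νH = A / BH) (hνV : νV = A / BV)
    (tl0 tlV tlH ttV ttH tpV tpH tp0 : ℝ)
    (h1 : tl0 = l0) (h2 : tlV = νH * pV) (h3 : tlH = νV * pH)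
    (h4 : ttV = (BV / BH) * tH) (h5 : ttH = (BH / BV) * tV)
    (h6 : tpV = lV / νH) (h7 : tpH = lH / νV) (h8 : tp0 = p0) :
    (tlH + ttH = lH + tH ∧ tlV + ttV = lV + tV) ∧
    (tl0 = l0 ∧ l0 = νV * νH * p0 ∧ tlV = νH * pV ∧ tlH = νV * pH) ∧
    (νV * ttV = νH * tH ∧ νH * ttH = νV * tV) ∧
    (νH * tpV = lV ∧ νV * tpH = lH ∧ tp0 = p0) ∧
    (tpV + tpH + tp0 = pV + pH + p0) :=
  stmt_13_general l0 lV lH tV tH pV pH p0 A BV BH hA hBV hBH hA0 hBV0 hBH0 hrev νH νV hνH hνV tl0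
    tlV tlH ttV ttH tpV tpH tp0 h1 h2 h3 h4 h5 h6 h7 h8
end

section
/- Suppose the parameter p satisfies the hypotheses of the s_{π/2} corollary: A, B_V, B_H ≠ 0, B_V λ_0 = A τ_V, and A p_0 = B_H τ_V, where A = (λ_H+τ_H)(λ_V+τ_V) - τ_V τ_H, B_V = (p_H+p_V)(λ_V+τ_V) - p_V λ_V, B_H = (p_H+p_V)(λ_H+τ_H) - p_H λ_H. Set ν_V = A/B_V, and define p̃ by λ̃_0 = (A/B_V)τ_V, λ̃_V = (A/B_V)p_H, λ̃_H = λ_V, τ̃_V = (B_H/B_V)τ_V, τ̃_H = τ_V, p̃_V = (B_V/A)λ_H, p̃_H = p_V, p̃_0 = (B_V/A)τ_H. Then the five conditions of the s_{π/2} theorem hold: (1) λ̃_H+τ̃_H = λ_V+τ_V and λ̃_V+τ̃_V = λ_H+τ_H; (2) λ̃_0 = λ_0 = ν_V τ_V, λ̃_V = ν_V p_H, λ̃_H = λ_V; (3) τ̃_V = ν_V p_0 and ν_V τ̃_H = λ_0; (4) ν_V p̃_V = λ_H, p̃_H = p_V, ν_V p̃_0 = τ_H; (5) p̃_V+p̃_H+p̃_0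 = p_V+p_H+p_0. -/
theorem stmt_14_general (l0 lV lH tV tH pV pH p0 : ℝ)
    (A BV BH : ℝ)
    (hA : A = (lH + tH) * (lV + tV) - tV * tH)
    (hBV : BV = (pH + pV) * (lV + tV) - pV * lV)
    (hBH : BH = (pH + pV) * (lH + tH) - pH * lH)
    (hA0 : A ≠ 0) (hBV0 : BV ≠ 0)
    (hrev1 : BV * l0 = A * tV) (hrev2 : A * p0 = BH * tV)
    (νV : ℝ) (hνV : νV = A / BV)
    (tl0 tlV tlH ttV ttH tpV tpH tp0 : ℝ)
    (h1 : tl0 = (A / BV) * tV) (h2 : tlV = (A / BV) * pH) (h3 : tlH = lV)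
    (h4 : ttV = (BH / BV) * tV) (h5 : ttH = tV)
    (h6 : tpV = (BV / A) * lH) (h7 : tpH = pV) (h8 : tp0 = (BV / A) * tH) :
    (tlH + ttH = lV + tV ∧ tlV + ttV = lH + tH) ∧
    (tl0 = l0 ∧ l0 = νV * tV ∧ tlV = νV * pH ∧ tlH = lV) ∧
    (ttV = νV * p0 ∧ νV * ttH = l0) ∧
    (νV * tpV = lH ∧ tpH = pV ∧ νV * tp0 = tH) ∧
    (tpV + tpH + tp0 = pV + pH + p0) := by
  -- Both sum conditions in (1) and (5) reduce to this polynomial identity (with `hrev2` for (5)).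
  have key : A * pH + BH * tV = BV * (lH + tH) := by
    subst hA hBV hBH
    ring
  subst hνV h1 h2 h3 h4 h5 h6 h7 h8
  refine ⟨⟨rfl, ?_⟩, ⟨?_, ?_, rfl, rfl⟩, ⟨?_, ?_⟩, ⟨?_, rfl, ?_⟩, ?_⟩
  · field_simp
    linear_combination key
  · field_simp
    linear_combination -hrev1
  · field_simp
    linear_combination hrev1
  · field_simp
    linear_combination -hrev2
  · field_simp
    linear_combination -hrev1
  · field_simp
  · field_simp
  · field_simp
    linear_combination -key - hrev2

theorem stmt_14 (l0 lV lH tV tH pV pH p0 : ℝ)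
    (hl0 : 0 ≤ l0) (hlV : 0 ≤ lV) (hlH : 0 ≤ lH) (htV : 0 ≤ tV) (htH : 0 ≤ tH)
    (hpV : 0 ≤ pV) (hpV' : pV ≤ 1) (hpH : 0 ≤ pH) (hpH' : pH ≤ 1)
    (hp0 : 0 ≤ p0) (hp0' : p0 ≤ 1)
    (A BV BH : ℝ)
    (hA : A = (lH + tH) * (lV + tV) - tV * tH)
    (hBV : BV = (pH + pV) * (lV + tV) - pV * lV)
    (hBH : BH = (pH + pV) * (lH + tH) - pH * lH)
    (hA0 : A ≠ 0) (hBV0 : BV ≠ 0) (hBH0 : BH ≠ 0)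
    (hrev1 : BV * l0 = A * tV) (hrev2 : A * p0 = BH * tV)
    (νV : ℝ) (hνV : νV = A / BV)
    (tl0 tlV tlH ttV ttH tpV tpH tp0 : ℝ)
    (h1 : tl0 = (A / BV) * tV) (h2 : tlV = (A / BV) * pH) (h3 : tlH = lV)
    (h4 : ttV = (BH / BV) * tV) (h5 : ttH = tV)
    (h6 : tpV = (BV / A) * lH) (h7 : tpH = pV) (h8 : tp0 = (BV / A) * tH) :
    (tlH + ttH = lV + tV ∧ tlV + ttV = lH + tH) ∧
    (tl0 = l0 ∧ l0 = νV * tV ∧ tlV = νV * pH ∧ tlH = lV) ∧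
    (ttV = νV * p0 ∧ νV * ttH = l0) ∧
    (νV * tpV = lH ∧ tpH = pV ∧ νV * tp0 = tH) ∧
    (tpV + tpH + tp0 = pV + pH + p0) :=
  stmt_14_general l0 lV lH tV tH pV pH p0 A BV BH hA hBV hBH hA0 hBV0 hrev1 hrev2 νV hνV tl0 tlV tlH
    ttV ttH tpV tpH tp0 h1 h2 h3 h4 h5 h6 h7 h8
end
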